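/- Let G be a bounded Vilenkin group, n ∈ ℕ, and x ∈ I_s \ I_{s+1} for some 0 ≤ s ≤ N − 1. Then ∫_{I_N} |D_n(x − t)| dμ(t) ≤ c M_s / M_N, where c depends only on sup_k m_k. -/

import Mathlib

open MeasureTheory Complex Real

def Mseq (m : ℕ → ℕ) : ℕ → ℕ
  | 0 => 1
  | k + 1 => m k * Mseq m k

def digit (m : ℕ → ℕ) (n j : ℕ) : ℕ := n / Mseq m j % m j

noncomputable def hi (m : ℕ → ℕ) (n : ℕ) : ℕ := sSup {j | digit m n j ≠ 0}

noncomputable def lo (m : ℕ → ℕ) (n : ℕ) : ℕ := sInf {j | digit m n j ≠ 0}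

noncomputable def rho (m : ℕ → ℕ) (n : ℕ) : ℕ := hi m n - lo m n

abbrev Gm (m : ℕ → ℕ) := ∀ k, ZMod (m k)

instance (n : ℕ) : MeasurableSpace (ZMod n) := ⊤

noncomputable def rad (m : ℕ → ℕ) (j : ℕ) (x : Gm m) : ℂ :=
  Complex.exp (2 * Real.pi * Complex.I * ((x j).val : ℂ) / (m j : ℂ))

noncomputable def vil (m : ℕ → ℕ) (n : ℕ) (x : Gm m) : ℂ :=
  ∏ᶠ j, rad m j x ^ digit m n j

noncomputable def Dker (m : ℕ → ℕ) (n : ℕ) (x : Gm m) : ℂ :=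
  ∑ k ∈ Finset.range n, vil m k x

/-- The defining property of the normalized Haar measure on the Vilenkin group:
every cylinder set `I_n(x)` has measure `1 / M_n`. -/
def IsVilenkinHaar (m : ℕ → ℕ) (μ : Measure (Gm m)) : Prop :=
  ∀ (n : ℕ) (x : Gm m), μ {y : Gm m | ∀ j < n, y j = x j} = (Mseq m n : ENNReal)⁻¹

noncomputable def vilCoeff (m : ℕ → ℕ) (μ : Measure (Gm m)) (f : Gm m → ℂ) (j : ℕ) : ℂ :=
  ∫ t, f t * (starRingEnd ℂ) (vil m j t) ∂μ

noncomputable def Svil (m : ℕ → ℕ) (μ : Measure (Gm m)) (f : Gm m → ℂ) (n : ℕ) (x : Gm m) : ℂ :=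
  ∑ j ∈ Finset.range n, vilCoeff m μ f j * vil m j x

/-! Write `r_s = rad m s` and `ψ_n = vil m n`. If `y_s ≠ 0`, then
`D_{M_{s+1}}(y) = (∑_{d < m_s} r_s(y)^d) D_{M_s}(y) = 0`, since `r_s(y)` is a nontrivial
`m_s`-th root of unity. As `ψ_{a M_L + b} = ψ_{a M_L} ψ_b` for `b < M_L`, the kernel
`D_n(y)` then reduces to `D_{n mod M_{s+1}}(y)` up to a unimodular factor, so
`|D_n(y)| ≤ M_{s+1} ≤ m_* M_s`. For `t ∈ I_N` with `s < N` we have `(x - t)_s = x_s ≠ 0`,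
and `μ(I_N) = 1 / M_N`. -/

open Finset

section
variable {m : ℕ → ℕ}

theorem Mseq_succ (m : ℕ → ℕ) (k : ℕ) : Mseq m (k + 1) = m k * Mseq m k := rfl

theorem Mseq_pos (hm : ∀ k, 0 < m k) (k : ℕ) : 0 < Mseq m k := by
  induction k with
  | zero => exact Nat.one_pos
  | succ k ih => exact Nat.mul_pos (hm k) ih

theorem Mseq_dvd_Mseq {j k : ℕ} (h : j ≤ k) : Mseq m j ∣ Mseq m k := by
  induction k, h using Nat.le_induction with
  | base => rfl
  | succ k _ ih => exact ih.mul_left (m k)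

theorem Mseq_mono (hm : ∀ k, 0 < m k) : Monotone (Mseq m) :=
  fun _ _ h => Nat.le_of_dvd (Mseq_pos hm _) (Mseq_dvd_Mseq h)

theorem lt_Mseq (hm : ∀ k, 2 ≤ m k) (n : ℕ) : n < Mseq m n := by
  induction n with
  | zero => exact Nat.one_pos
  | succ n ih => rw [Mseq_succ]; nlinarith [hm n]

theorem digit_eq_zero_of_lt {n j : ℕ} (h : n < Mseq m j) : digit m n j = 0 := by
  simp [digit, Nat.div_eq_of_lt h]

theorem digit_mul_Mseq_add_of_lt (hm : ∀ k, 0 < m k) {L j : ℕ} (hj : j < L) (a b : ℕ) :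
    digit m (a * Mseq m L + b) j = digit m b j := by
  obtain ⟨k, hk⟩ := Mseq_dvd_Mseq (m := m) hj
  have : a * Mseq m L + b = b + a * k * m j * Mseq m j := by rw [hk, Mseq_succ]; ring
  rw [digit, digit, this, Nat.add_mul_div_right _ _ (Mseq_pos hm j), Nat.add_mul_mod_self_right]

theorem digit_mul_Mseq_of_lt (hm : ∀ k, 0 < m k) {L j : ℕ} (hj : j < L) (a : ℕ) :
    digit m (a * Mseq m L) j = 0 := by
  simpa [digit] using digit_mul_Mseq_add_of_lt hm hj a 0

theorem digit_mul_Mseq_add_of_le (hm : ∀ k, 0 < m k) {L j : ℕ} (hj : L ≤ j) (a : ℕ)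
    {b : ℕ} (hb : b < Mseq m L) : digit m (a * Mseq m L + b) j = digit m (a * Mseq m L) j := by
  obtain ⟨k, hk⟩ := Mseq_dvd_Mseq (m := m) hj
  have hL := Mseq_pos hm L
  have hdiv : ∀ b < Mseq m L, (a * Mseq m L + b) / Mseq m j = a / k := fun b hb => by
    rw [hk, ← Nat.div_div_eq_div_mul, mul_comm a, Nat.mul_add_div hL, Nat.div_eq_of_lt hb,
      add_zero]
  have hdiv₀ := hdiv 0 hL
  rw [add_zero] at hdiv₀
  rw [digit, digit, hdiv b hb, hdiv₀]

theorem norm_rad (j : ℕ) (x : Gm m) : ‖rad m j x‖ = 1 := by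
  simp [rad, Complex.norm_exp]

theorem rad_eq_pow (j : ℕ) (x : Gm m) : rad m j x = exp (2 * π * I / m j) ^ (x j).val := by
  rw [rad, ← Complex.exp_nat_mul]
  ring_nf

theorem sum_rad_pow_eq_zero {s : ℕ} (hm : 0 < m s) {x : Gm m} (hx : x s ≠ 0) :
    ∑ d ∈ range (m s), rad m s x ^ d = 0 := by
  have : NeZero (m s) := ⟨hm.ne'⟩
  have hζ := Complex.isPrimitiveRoot_exp (m s) hm.ne'
  have hne : rad m s x ≠ 1 := by
    rw [rad_eq_pow]
    exact hζ.pow_ne_one_of_pos_of_lt ((ZMod.val_ne_zero _).mpr hx) (ZMod.val_lt _)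
  have hpow : rad m s x ^ m s = 1 := by
    rw [rad_eq_pow, pow_right_comm, hζ.pow_eq_one, one_pow]
  rw [geom_sum_eq hne, hpow, sub_self, zero_div]

theorem norm_vil (n : ℕ) (x : Gm m) : ‖vil m n x‖ = 1 :=
  finprod_induction (fun z => ‖z‖ = 1) norm_one
    (fun _ _ ha hb => by rw [norm_mul, ha, hb, one_mul])
    fun j => by rw [norm_pow, norm_rad, one_pow]

theorem finite_mulSupport_rad_pow_digit (hm : ∀ k, 2 ≤ m k) (n : ℕ) (x : Gm m) :
    (Function.mulSupport fun j => rad m j x ^ digit m n j).Finite :=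
  (Set.finite_Iio n).subset fun j hj => by
    by_contra h
    refine hj ?_
    change rad m j x ^ digit m n j = 1
    rw [digit_eq_zero_of_lt ((lt_Mseq hm n).trans_le
      (Mseq_mono (fun k => two_pos.trans_le (hm k)) (not_lt.mp h))), pow_zero]

theorem vil_mul_Mseq_add (hm : ∀ k, 2 ≤ m k) {L b : ℕ} (hb : b < Mseq m L) (a : ℕ)
    (x : Gm m) :
    vil m (a * Mseq m L + b) x = vil m (a * Mseq m L) x * vil m b x := by
  have hm₀ : ∀ k, 0 < m k := fun k => two_pos.trans_le (hm k)
  rw [vil, vil, vil, ← finprod_mul_distrib (finite_mulSupport_rad_pow_digit hm _ x)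
    (finite_mulSupport_rad_pow_digit hm _ x)]
  refine finprod_congr fun j => ?_
  rcases lt_or_ge j L with hj | hj
  · rw [digit_mul_Mseq_add_of_lt hm₀ hj, digit_mul_Mseq_of_lt hm₀ hj, pow_zero, one_mul]
  · rw [digit_mul_Mseq_add_of_le hm₀ hj a hb,
      digit_eq_zero_of_lt (hb.trans_le (Mseq_mono hm₀ hj)), pow_zero, mul_one]

theorem vil_mul_Mseq (hm : ∀ k, 0 < m k) {s d : ℕ} (hd : d < m s) (x : Gm m) :
    vil m (d * Mseq m s) x = rad m s x ^ d := by
  rw [vil, finprod_eq_single _ s]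
  · rw [digit, Nat.mul_div_cancel _ (Mseq_pos hm s), Nat.mod_eq_of_lt hd]
  · intro j hj
    rcases lt_or_gt_of_ne hj with hj | hj
    · rw [digit_mul_Mseq_of_lt hm hj, pow_zero]
    · have : d * Mseq m s < Mseq m j :=
        calc d * Mseq m s < m s * Mseq m s := Nat.mul_lt_mul_of_pos_right hd (Mseq_pos hm s)
          _ ≤ Mseq m j := Mseq_mono hm hj
      rw [digit_eq_zero_of_lt this, pow_zero]

theorem norm_Dker_le (n : ℕ) (x : Gm m) : ‖Dker m n x‖ ≤ n :=
  (norm_sum_le _ _).trans (by simp [norm_vil])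

theorem Dker_mul_Mseq_add (hm : ∀ k, 2 ≤ m k) {L b : ℕ} (hb : b ≤ Mseq m L) (a : ℕ)
    (x : Gm m) :
    Dker m (a * Mseq m L + b) x =
      Dker m (a * Mseq m L) x + vil m (a * Mseq m L) x * Dker m b x := by
  rw [Dker, Dker, Dker, sum_range_add, mul_sum]
  congr 1
  exact sum_congr rfl fun i hi => vil_mul_Mseq_add hm ((mem_range.mp hi).trans_le hb) a x

theorem Dker_mul_Mseq (hm : ∀ k, 2 ≤ m k) (q L : ℕ) (x : Gm m) :
    Dker m (q * Mseq m L) x =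
      (∑ a ∈ range q, vil m (a * Mseq m L) x) * Dker m (Mseq m L) x := by
  induction q with
  | zero => simp [Dker]
  | succ q ih =>
    rw [add_mul, one_mul, Dker_mul_Mseq_add hm le_rfl, ih, sum_range_succ, add_mul]

theorem Dker_Mseq_succ_eq_zero (hm : ∀ k, 2 ≤ m k) {s : ℕ} {x : Gm m} (hx : x s ≠ 0) :
    Dker m (Mseq m (s + 1)) x = 0 := by
  have hm₀ : ∀ k, 0 < m k := fun k => two_pos.trans_le (hm k)
  rw [Mseq_succ, Dker_mul_Mseq hm,
    sum_congr rfl fun d hd => vil_mul_Mseq hm₀ (mem_range.mp hd) x,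
    sum_rad_pow_eq_zero (hm₀ s) hx, zero_mul]

theorem norm_Dker_le_Mseq_succ (hm : ∀ k, 2 ≤ m k) (n : ℕ) {s : ℕ} {x : Gm m}
    (hx : x s ≠ 0) :
    ‖Dker m n x‖ ≤ Mseq m (s + 1) := by
  have hr := Nat.mod_lt n (Mseq_pos (fun k => two_pos.trans_le (hm k)) (s + 1))
  rw [← Nat.div_add_mod' n (Mseq m (s + 1)), Dker_mul_Mseq_add hm hr.le, Dker_mul_Mseq hm,
    Dker_Mseq_succ_eq_zero hm hx, mul_zero, zero_add, norm_mul, norm_vil, one_mul]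
  exact (norm_Dker_le _ x).trans (by exact_mod_cast hr.le)

end

/-- For `x ∈ I_s \ I_{s+1}` with `0 ≤ s ≤ N - 1`,
`∫_{I_N} |D_n (x - t)| dμ(t) ≤ c M_s / M_N`, with `c` depending only on `sup m_k`. -/
theorem stmt_14 (mstar : ℕ) :
    ∃ c : ℝ, 0 < c ∧
      ∀ (m : ℕ → ℕ), (∀ k, 2 ≤ m k) → (∀ k, m k ≤ mstar) →
        ∀ (μ : Measure (Gm m)), IsProbabilityMeasure μ → IsVilenkinHaar m μ →
          ∀ (n N s : ℕ) (x : Gm m), s < N → (∀ j < s, x j = 0) → x s ≠ 0 →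
            ∫ t in {t : Gm m | ∀ j < N, t j = 0},
                ‖Dker m n (x - t)‖ ∂μ
              ≤ c * (Mseq m s : ℝ) / (Mseq m N : ℝ) := by
  refine ⟨mstar + 1, by positivity, ?_⟩
  intro m hm hmstar μ _ hμ n N s x hsN _ hxs
  set I := {t : Gm m | ∀ j < N, t j = 0}
  have hbound : ∀ t ∈ I, ‖‖Dker m n (x - t)‖‖ ≤ Mseq m (s + 1) := fun t ht => by
    rw [norm_norm]
    exact norm_Dker_le_Mseq_succ hm n (by simpa [ht s hsN] using hxs)
  have hI : μ I = (Mseq m N : ENNReal)⁻¹ := by simpa using hμ N 0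
  have hms : (m s : ℝ) ≤ mstar + 1 := by exact_mod_cast (hmstar s).trans (Nat.le_succ _)
  calc ∫ t in I, ‖Dker m n (x - t)‖ ∂μ ≤ Mseq m (s + 1) * μ.real I :=
        (Real.le_norm_self _).trans
          (norm_setIntegral_le_of_norm_le_const (measure_lt_top μ I) hbound)
    _ = m s * Mseq m s / Mseq m N := by
        rw [measureReal_def, hI, ENNReal.toReal_inv, ENNReal.toReal_natCast, Mseq_succ]
        push_cast
        ring
    _ ≤ (mstar + 1) * Mseq m s / Mseq m N := by gcongr
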